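/- Let f : ℝⁿ → ℝ be convex with minimizer x_* and suppose every subgradient g ∈ ∂f(x) at every x satisfies ‖g‖ ≤ L for some L > 0. Let (x_k) be generated by the Polyak subgradient method from x_0. Then for any ε > 0 there exists an index k ≤ 8L²‖x_0 − x_*‖²/ε² with f(x_k) − f(x_*) ≤ ε. -/

import Mathlib

/-!
Whenever the gap `f (x k) - f xs` exceeds `ε`, the subgradient inequality at `xs` makes the
Polyak step shrink `‖x k - xs‖²` by at least `gap² / ‖g k‖² ≥ ε² / L²`. Since `‖x 0 - xs‖²` can
absorb at most `L² ‖x 0 - xs‖² / ε²` such decreases, an `ε`-good iterate appears before then.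
-/

noncomputable section
open Classical

/-- Subdifferential of `f` at `x`. -/
def SubdiffAt {n : ℕ} (f : EuclideanSpace ℝ (Fin n) → ℝ) (x : EuclideanSpace ℝ (Fin n)) :
    Set (EuclideanSpace ℝ (Fin n)) :=
  {g | ∀ y, f x + (inner ℝ g (y - x) : ℝ) ≤ f y}

/-- `(x, g)` is a trajectory of the Polyak subgradient method for `f` with minimizer value
`f xs`: each `g k` is a subgradient at `x k` and the Polyak step is taken
(staying put when the subgradient is zero). -/
def PolyakSeq {n : ℕ} (f : EuclideanSpace ℝ (Fin n) → ℝ) (xs : EuclideanSpace ℝ (Fin n))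
    (x g : ℕ → EuclideanSpace ℝ (Fin n)) : Prop :=
  (∀ k, g k ∈ SubdiffAt f (x k)) ∧
  ∀ k, x (k + 1) =
    if g k = 0 then x k else x k - ((f (x k) - f xs) / ‖g k‖ ^ 2) • g k

lemma mul_le_sub_of_le_sub_succ {u : ℕ → ℝ} {c : ℝ} {m : ℕ}
    (h : ∀ k < m, c ≤ u k - u (k + 1)) : m * c ≤ u 0 - u m := by
  calc (m : ℝ) * c = ∑ _k ∈ Finset.range m, c := by simp
    _ ≤ ∑ k ∈ Finset.range m, (u k - u (k + 1)) :=
        Finset.sum_le_sum fun k hk => h k (Finset.mem_range.mp hk)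
    _ = u 0 - u m := Finset.sum_range_sub' u m

lemma norm_sub_smul_sq_le {E : Type*} [NormedAddCommGroup E] [InnerProductSpace ℝ E]
    {d g : E} {Δ : ℝ} (hΔ : 0 ≤ Δ) (hΔg : Δ ≤ inner ℝ g d) :
    ‖d - (Δ / ‖g‖ ^ 2) • g‖ ^ 2 ≤ ‖d‖ ^ 2 - Δ ^ 2 / ‖g‖ ^ 2 := by
  have hsmul_sq : (Δ / ‖g‖ ^ 2) ^ 2 * ‖g‖ ^ 2 = Δ ^ 2 / ‖g‖ ^ 2 := by
    rcases eq_or_ne ‖g‖ 0 with hg | hg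
    · simp [hg]
    · field_simp
  have hdescent : Δ ^ 2 / ‖g‖ ^ 2 ≤ Δ / ‖g‖ ^ 2 * inner ℝ g d := by
    rw [div_mul_eq_mul_div, sq]
    gcongr
  rw [norm_sub_sq_real, inner_smul_right, real_inner_comm, norm_smul, mul_pow,
    Real.norm_eq_abs, sq_abs, hsmul_sq]
  linarith

section SubdiffAt

variable {n : ℕ} {f : EuclideanSpace ℝ (Fin n) → ℝ} {x y v : EuclideanSpace ℝ (Fin n)}

lemma sub_le_inner_of_mem_subdiffAt (hv : v ∈ SubdiffAt f x) (y : EuclideanSpace ℝ (Fin n)) :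
    f x - f y ≤ inner ℝ v (x - y) := by
  have := hv y
  rw [← neg_sub x y, inner_neg_right] at this
  linarith

lemma ne_zero_of_mem_subdiffAt_of_lt (hv : v ∈ SubdiffAt f x) (hlt : f y < f x) : v ≠ 0 := by
  rintro rfl
  have := sub_le_inner_of_mem_subdiffAt hv y
  rw [inner_zero_left] at this
  linarith

end SubdiffAt

namespace PolyakSeq

variable {n : ℕ} {f : EuclideanSpace ℝ (Fin n) → ℝ} {xs : EuclideanSpace ℝ (Fin n)}
  {x g : ℕ → EuclideanSpace ℝ (Fin n)}

lemma succ_eq (hseq : PolyakSeq f xs x g) (k : ℕ) :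
    x (k + 1) = x k - ((f (x k) - f xs) / ‖g k‖ ^ 2) • g k := by
  rw [hseq.2 k]
  split_ifs with hg
  · simp [hg]
  · rfl

lemma norm_succ_sub_sq_le (hseq : PolyakSeq f xs x g) {k : ℕ} (hgap : 0 ≤ f (x k) - f xs) :
    ‖x (k + 1) - xs‖ ^ 2 ≤ ‖x k - xs‖ ^ 2 - (f (x k) - f xs) ^ 2 / ‖g k‖ ^ 2 := by
  rw [hseq.succ_eq k, sub_right_comm]
  exact norm_sub_smul_sq_le hgap (sub_le_inner_of_mem_subdiffAt (hseq.1 k) xs)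

lemma sq_le_mul_norm_sub_sq_sub (hseq : PolyakSeq f xs x g) {L ε : ℝ} {k : ℕ}
    (hgL : ‖g k‖ ≤ L) (hε : 0 ≤ ε) (hgap : ε < f (x k) - f xs) :
    ε ^ 2 ≤ L ^ 2 * (‖x k - xs‖ ^ 2 - ‖x (k + 1) - xs‖ ^ 2) := by
  have hg : 0 < ‖g k‖ :=
    norm_pos_iff.mpr (ne_zero_of_mem_subdiffAt_of_lt (hseq.1 k) (by linarith))
  have hdecrease := hseq.norm_succ_sub_sq_le (k := k) (by linarith)
  calc ε ^ 2 ≤ (f (x k) - f xs) ^ 2 := by gcongr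
    _ = ‖g k‖ ^ 2 * ((f (x k) - f xs) ^ 2 / ‖g k‖ ^ 2) := by field_simp
    _ ≤ L ^ 2 * (‖x k - xs‖ ^ 2 - ‖x (k + 1) - xs‖ ^ 2) := by gcongr; linarith

end PolyakSeq

theorem polyak_general_rate_general {n : ℕ} (f : EuclideanSpace ℝ (Fin n) → ℝ) (L : ℝ)
    (xs : EuclideanSpace ℝ (Fin n)) (x g : ℕ → EuclideanSpace ℝ (Fin n))
    (hgL : ∀ (z v : EuclideanSpace ℝ (Fin n)), v ∈ SubdiffAt f z → ‖v‖ ≤ L)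
    (hseq : PolyakSeq f xs x g)
    (ε : ℝ) (hε : 0 < ε) :
    ∃ k : ℕ, (k : ℝ) ≤ 8 * L ^ 2 * ‖x 0 - xs‖ ^ 2 / ε ^ 2 ∧ f (x k) - f xs ≤ ε := by
  by_contra! hgap
  set B := 8 * L ^ 2 * ‖x 0 - xs‖ ^ 2 / ε ^ 2
  set m := ⌊B⌋₊ + 1
  have hdecrease : ∀ k < m,
      ε ^ 2 ≤ L ^ 2 * ‖x k - xs‖ ^ 2 - L ^ 2 * ‖x (k + 1) - xs‖ ^ 2 := by
    intro k hk
    have hkB : (k : ℝ) ≤ B :=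
      (Nat.cast_le.mpr (Nat.lt_succ_iff.mp hk)).trans (Nat.floor_le (by positivity))
    rw [← mul_sub]
    exact hseq.sq_le_mul_norm_sub_sq_sub (hgL _ _ (hseq.1 k)) hε.le (hgap k hkB)
  have htotal : m * ε ^ 2 ≤ L ^ 2 * ‖x 0 - xs‖ ^ 2 :=
    (mul_le_sub_of_le_sub_succ hdecrease).trans (sub_le_self _ (by positivity))
  have hBm : B < m := by exact_mod_cast Nat.lt_floor_add_one B
  rw [div_lt_iff₀ (by positivity)] at hBm
  linarith [mul_nonneg (sq_nonneg L) (sq_nonneg ‖x 0 - xs‖)]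

/-- for L-Lipschitz convex f, the Polyak subgradient method finds an
ε-minimizer within 8L²‖x₀ − x_*‖²/ε² iterations. -/
theorem polyak_general_rate {n : ℕ} (f : EuclideanSpace ℝ (Fin n) → ℝ) (L : ℝ)
    (xs : EuclideanSpace ℝ (Fin n)) (x g : ℕ → EuclideanSpace ℝ (Fin n))
    (hconv : ConvexOn ℝ Set.univ f)
    (hmin : ∀ y, f xs ≤ f y)
    (hL : 0 < L)
    (hgL : ∀ (z v : EuclideanSpace ℝ (Fin n)), v ∈ SubdiffAt f z → ‖v‖ ≤ L)
    (hseq : PolyakSeq f xs x g)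
    (ε : ℝ) (hε : 0 < ε) :
    ∃ k : ℕ, (k : ℝ) ≤ 8 * L ^ 2 * ‖x 0 - xs‖ ^ 2 / ε ^ 2 ∧ f (x k) - f xs ≤ ε :=
  polyak_general_rate_general f L xs x g hgL hseq ε hε

end
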